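/- arXiv:1704.08156 — 4 statements merged into one kernel-verified Lean document; each statement's English description precedes it below -/
import Mathlib

section
/- Let T be an invertible linear map on ℝ^{d+m−1} such that T(M) = M, where M = ℤ^d × (E−E). Write T in block form T = [[U, V],[X, W]] with U a d×d block. Then X = 0, U ∈ GL_d(ℤ), and W permutes the set E−E in the sense that W restricted to E−E is a bijection of E−E onto itself. -/
open Matrix

/-- The set `E ⊂ ℤ^{m-1}`: the zero vector together with the standard basis. -/
def Eset (m : ℕ) : Set (Fin (m - 1) → ℤ) :=
  insert 0 {v | ∃ i, v = Pi.single i 1}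

/-- `E − E` as a set of real vectors. -/
def EmEℝ (m : ℕ) : Set (Fin (m - 1) → ℝ) :=
  {x | ∃ a ∈ Eset m, ∃ b ∈ Eset m, x = fun j => ((a j : ℝ) - (b j : ℝ))}

/-- `M = ℤ^d × (E−E)` as a set of real vectors in `ℝ^{d+m-1}`. -/
def MsetR (d m : ℕ) : Set (Fin d ⊕ Fin (m - 1) → ℝ) :=
  {k | (∀ i, ∃ z : ℤ, k (Sum.inl i) = (z : ℝ)) ∧ (fun j => k (Sum.inr j)) ∈ EmEℝ m}

/-! If `z ∈ ℤ^d` then `(n z, 0) ∈ M` for all `n`, and the `E−E`-component of its image is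
`n X z`; as `E−E` is finite, `X = 0`. Then `T` acts on the second component through `W` alone,
so `W` maps the finite set `E−E` onto itself, hence bijectively. Images of `(e_j, 0)` show that
`U` is integral, and preimages of `(w, 0)`, whose second component is forced to be `0` by the
injectivity of `W`, show that `U` is surjective on `ℤ^d`, hence unimodular. -/

open Set Function

lemma eq_zero_of_forall_nsmul_mem {E : Type*} [AddCommGroup E] [Module ℝ E] {S : Set E}
    (hS : S.Finite) {v : E} (hv : ∀ n : ℕ, n • v ∈ S) : v = 0 := by
  by_contra hne
  refine infinite_range_of_injective (fun a b hab => ?_) (hS.subset (range_subset_iff.2 hv))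
  exact Nat.cast_injective (R := ℝ) <|
    smul_left_injective ℝ hne (by simpa only [← Nat.cast_smul_eq_nsmul ℝ] using hab)

namespace Matrix

variable {ι κ R : Type*} [Fintype ι] [Fintype κ] [NonUnitalNonAssocSemiring R]

lemma mulVec_comp_inl (T : Matrix (ι ⊕ κ) (ι ⊕ κ) R) (k : ι ⊕ κ → R) :
    (T *ᵥ k) ∘ Sum.inl = T.toBlocks₁₁ *ᵥ (k ∘ Sum.inl) + T.toBlocks₁₂ *ᵥ (k ∘ Sum.inr) := by
  conv_lhs => rw [← fromBlocks_toBlocks T, fromBlocks_mulVec]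
  rfl

lemma mulVec_comp_inr (T : Matrix (ι ⊕ κ) (ι ⊕ κ) R) (k : ι ⊕ κ → R) :
    (T *ᵥ k) ∘ Sum.inr = T.toBlocks₂₁ *ᵥ (k ∘ Sum.inl) + T.toBlocks₂₂ *ᵥ (k ∘ Sum.inr) := by
  conv_lhs => rw [← fromBlocks_toBlocks T, fromBlocks_mulVec]
  rfl

end Matrix

/-- `ℤ^ι × S` inside `ℝ^(ι ⊕ κ)`; `MsetR d m` is `intLatticeProd (Fin d) (EmEℝ m)` by `rfl`. -/
def intLatticeProd (ι : Type*) {κ : Type*} (S : Set (κ → ℝ)) : Set (ι ⊕ κ → ℝ) :=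
  {k | (∀ i, ∃ z : ℤ, k (Sum.inl i) = z) ∧ k ∘ Sum.inr ∈ S}

lemma exists_int_eq_single_apply {ι : Type*} [DecidableEq ι] (j : ι) (n : ℤ) (l : ι) :
    ∃ z : ℤ, (Pi.single j (n : ℝ) : ι → ℝ) l = z :=
  ⟨(Pi.single j n : ι → ℤ) l,
    congrFun (Pi.single_op (fun _ => Int.cast) (fun _ => Int.cast_zero) j n) l⟩

section

variable {ι κ : Type*} [Fintype ι] [Fintype κ] {T : Matrix (ι ⊕ κ) (ι ⊕ κ) ℝ} {S : Set (κ → ℝ)}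

lemma toBlocks₂₁_eq_zero_of_mapsTo [DecidableEq ι] (hS : S.Finite) (h0 : 0 ∈ S)
    (hT : MapsTo (T *ᵥ ·) (intLatticeProd ι S) (intLatticeProd ι S)) : T.toBlocks₂₁ = 0 := by
  ext i j
  have hcol : T.toBlocks₂₁ *ᵥ Pi.single j 1 = 0 := by
    refine eq_zero_of_forall_nsmul_mem hS fun n => ?_
    have := (hT (x := Sum.elim (Pi.single j ((n : ℤ) : ℝ)) 0)
      ⟨exists_int_eq_single_apply j n, h0⟩).2
    rw [mulVec_comp_inr, Sum.elim_comp_inl, Sum.elim_comp_inr, mulVec_zero, add_zero] at this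
    convert this using 1
    ext
    simp [mulVec_single, mul_comm]
  simpa using congrFun hcol i

lemma exists_int_map_eq_toBlocks₁₁ [DecidableEq ι] (h0 : 0 ∈ S)
    (hT : MapsTo (T *ᵥ ·) (intLatticeProd ι S) (intLatticeProd ι S)) :
    ∃ U : Matrix ι ι ℤ, U.map (↑) = T.toBlocks₁₁ := by
  have hint : ∀ i j, ∃ z : ℤ, z = T.toBlocks₁₁ i j := fun i j => by
    obtain ⟨z, hz⟩ := (hT (x := Sum.elim (Pi.single j 1) 0)
      ⟨by simpa using exists_int_eq_single_apply j 1, h0⟩).1 i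
    refine ⟨z, hz.symm.trans ?_⟩
    simpa using congrFun (mulVec_comp_inl T (Sum.elim (Pi.single j 1) 0)) i
  choose U hU using hint
  exact ⟨Matrix.of U, Matrix.ext hU⟩

lemma mapsTo_toBlocks₂₂ (hT : MapsTo (T *ᵥ ·) (intLatticeProd ι S) (intLatticeProd ι S)) :
    MapsTo (T.toBlocks₂₂ *ᵥ ·) S S := fun v hv => by
  have := (hT (x := Sum.elim 0 v) ⟨fun _ => ⟨0, by simp⟩, hv⟩).2
  rwa [mulVec_comp_inr, Sum.elim_comp_inl, Sum.elim_comp_inr, mulVec_zero, zero_add] at this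

lemma mulVec_comp_inr_of_toBlocks₂₁_eq_zero (hX : T.toBlocks₂₁ = 0) (k : ι ⊕ κ → ℝ) :
    (T *ᵥ k) ∘ Sum.inr = T.toBlocks₂₂ *ᵥ (k ∘ Sum.inr) := by
  rw [mulVec_comp_inr, hX, zero_mulVec, zero_add]

lemma surjOn_toBlocks₂₂ (hX : T.toBlocks₂₁ = 0)
    (hT : SurjOn (T *ᵥ ·) (intLatticeProd ι S) (intLatticeProd ι S)) :
    SurjOn (T.toBlocks₂₂ *ᵥ ·) S S := fun u hu => by
  obtain ⟨k, hk, hTk⟩ := hT (a := Sum.elim 0 u) ⟨fun _ => ⟨0, by simp⟩, hu⟩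
  refine ⟨k ∘ Sum.inr, hk.2, ?_⟩
  simpa [hTk] using (mulVec_comp_inr_of_toBlocks₂₁_eq_zero hX k).symm

lemma mulVec_surjective_of_surjOn {U : Matrix ι ι ℤ} (hU : U.map (↑) = T.toBlocks₁₁)
    (hX : T.toBlocks₂₁ = 0) (h0 : 0 ∈ S) (hW : InjOn (T.toBlocks₂₂ *ᵥ ·) S)
    (hT : SurjOn (T *ᵥ ·) (intLatticeProd ι S) (intLatticeProd ι S)) :
    Surjective U.mulVec := fun w => by
  obtain ⟨k, hk, hTk⟩ := hT (a := Sum.elim (Int.cast ∘ w) 0) ⟨fun i => ⟨w i, rfl⟩, h0⟩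
  have hinr : k ∘ Sum.inr = 0 := hW hk.2 h0 <| by
    simpa [hTk] using (mulVec_comp_inr_of_toBlocks₂₁_eq_zero hX k).symm
  choose z hz using hk.1
  refine ⟨z, (Int.cast_injective (α := ℝ)).comp_left ?_⟩
  calc Int.cast ∘ (U *ᵥ z) = U.map (↑) *ᵥ (Int.cast ∘ z) :=
        funext (RingHom.map_mulVec (Int.castRingHom ℝ) U z)
    _ = T.toBlocks₁₁ *ᵥ (k ∘ Sum.inl) + T.toBlocks₁₂ *ᵥ (k ∘ Sum.inr) := by
        rw [hU, hinr, mulVec_zero, add_zero]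
        exact congrArg _ (funext fun i => (hz i).symm)
    _ = (T *ᵥ k) ∘ Sum.inl := (mulVec_comp_inl T k).symm
    _ = Int.cast ∘ w := by rw [show T *ᵥ k = _ from hTk, Sum.elim_comp_inl]

theorem block_structure_of_image_intLatticeProd [DecidableEq ι] (hS : S.Finite) (h0 : 0 ∈ S)
    (hT : (T *ᵥ ·) '' intLatticeProd ι S = intLatticeProd ι S) :
    T.toBlocks₂₁ = 0 ∧ (∃ U : Matrix ι ι ℤ, IsUnit U.det ∧ U.map (↑) = T.toBlocks₁₁) ∧
      BijOn (T.toBlocks₂₂ *ᵥ ·) S S := by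
  have hmaps : MapsTo (T *ᵥ ·) (intLatticeProd ι S) (intLatticeProd ι S) :=
    mapsTo_iff_image_subset.2 hT.subset
  have hsurj : SurjOn (T *ᵥ ·) (intLatticeProd ι S) (intLatticeProd ι S) := hT.symm.subset
  have hX := toBlocks₂₁_eq_zero_of_mapsTo hS h0 hmaps
  have hW := (hS.surjOn_iff_bijOn_of_mapsTo (mapsTo_toBlocks₂₂ hmaps)).1
    (surjOn_toBlocks₂₂ hX hsurj)
  obtain ⟨U, hU⟩ := exists_int_map_eq_toBlocks₁₁ h0 hmaps
  have hUsurj := mulVec_surjective_of_surjOn hU hX h0 hW.injOn hsurj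
  exact ⟨hX, ⟨U, (isUnit_iff_isUnit_det U).1 (mulVec_surjective_iff_isUnit.1 hUsurj), hU⟩, hW⟩

end

lemma Eset_finite (m : ℕ) : (Eset m).Finite :=
  ((finite_range fun i : Fin (m - 1) => (Pi.single i 1 : Fin (m - 1) → ℤ)).subset
    (by rintro _ ⟨i, rfl⟩; exact ⟨i, rfl⟩)).insert (0 : Fin (m - 1) → ℤ)

lemma EmEℝ_finite (m : ℕ) : (EmEℝ m).Finite :=
  (Finite.image2 (fun (a b : Fin (m - 1) → ℤ) j => (a j : ℝ) - b j)
    (Eset_finite m) (Eset_finite m)).subset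
    fun _ ⟨a, ha, b, hb, hx⟩ => ⟨a, ha, b, hb, hx.symm⟩

lemma zero_mem_EmEℝ (m : ℕ) : 0 ∈ EmEℝ m :=
  ⟨0, mem_insert _ _, 0, mem_insert _ _, by ext; simp⟩

theorem stmt_3_general (d m : ℕ) (T : Matrix (Fin d ⊕ Fin (m - 1)) (Fin d ⊕ Fin (m - 1)) ℝ)
    (hM : (fun k => T.mulVec k) '' MsetR d m = MsetR d m) :
    (∀ i j, T (Sum.inr i) (Sum.inl j) = 0) ∧
    (∃ U : Matrix (Fin d) (Fin d) ℤ, IsUnit U.det ∧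
      ∀ i j, T (Sum.inl i) (Sum.inl j) = (U i j : ℝ)) ∧
    Set.BijOn (fun x => (Matrix.of fun i j => T (Sum.inr i) (Sum.inr j)).mulVec x)
      (EmEℝ m) (EmEℝ m) := by
  obtain ⟨hX, ⟨U, hUdet, hU⟩, hW⟩ :=
    block_structure_of_image_intLatticeProd (EmEℝ_finite m) (zero_mem_EmEℝ m) hM
  exact ⟨fun i j => congr_fun₂ hX i j, ⟨U, hUdet, fun i j => (congr_fun₂ hU i j).symm⟩, hW⟩

/-- a linear automorphism `T` of `ℝ^{d+m-1}` with `T(M) = M` has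
block form `[[U, V],[0, W]]` with `U ∈ GL_d(ℤ)` and `W` permuting `E−E`. -/
theorem stmt_3 (d m : ℕ) (T : Matrix (Fin d ⊕ Fin (m - 1)) (Fin d ⊕ Fin (m - 1)) ℝ)
    (hinv : IsUnit T.det)
    (hM : (fun k => T.mulVec k) '' MsetR d m = MsetR d m) :
    (∀ i j, T (Sum.inr i) (Sum.inl j) = 0) ∧
    (∃ U : Matrix (Fin d) (Fin d) ℤ, IsUnit U.det ∧
      ∀ i j, T (Sum.inl i) (Sum.inl j) = (U i j : ℝ)) ∧
    Set.BijOn (fun x => (Matrix.of fun i j => T (Sum.inr i) (Sum.inr j)).mulVec x)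
      (EmEℝ m) (EmEℝ m) :=
  stmt_3_general d m T hM
end

section
/- Let D₉ and c = (1/2,…,1/2) be as above. For every t in some open neighborhood of c, the 2-periodic set Ξ(t) = D₉ ∪ (D₉ + t) has packing radius 1/√2, i.e., every pair of distinct points of Ξ(t) is at distance at least √2, with equality attained. -/
/-- The lattice `D₉` as a set of points of `ℝ⁹`. -/
def D9 : Set (EuclideanSpace ℝ (Fin 9)) :=
  {x | ∃ n : Fin 9 → ℤ, Even (∑ i, n i) ∧ ∀ i, x i = (n i : ℝ)}

/-- The 2-periodic set `Ξ(t) = D₉ ∪ (D₉ + t)`. -/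
def Xi (t : EuclideanSpace ℝ (Fin 9)) : Set (EuclideanSpace ℝ (Fin 9)) :=
  D9 ∪ (fun x => x + t) '' D9

/-- The deep hole `c = (1/2,…,1/2)`. -/
noncomputable def cHole : EuclideanSpace ℝ (Fin 9) := WithLp.toLp 2 (fun _ => 1 / 2)

/-!
A nonzero `k ∈ ℤ⁹` with even coordinate sum has `∑ kᵢ² ≡ ∑ kᵢ ≡ 0 (mod 2)`, so the minimal
distance in `D₉` is `√2`. Since `D₉` is a group, a distance between `D₉` and `D₉ + t` is a
distance from `t` to `D₉`; the deep hole `c` is at distance at least `3/2 > √2` from `D₉`, so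
for `dist t c < 3/2 - √2` these cross distances stay above `√2`. The value `√2` is attained
inside `D₉`, e.g. between `0` and `e₁ + e₂`.
-/

theorem Int.two_le_sum_sq_of_even_sum {ι : Type*} [Fintype ι] {k : ι → ℤ}
    (he : Even (∑ i, k i)) (hk : k ≠ 0) : 2 ≤ ∑ i, k i ^ 2 := by
  have hsq : Even (∑ i, k i ^ 2) := by
    have : ∑ i, k i ^ 2 = ∑ i, k i * (k i - 1) + ∑ i, k i := by
      rw [← Finset.sum_add_distrib]; congr 1; ext i; ring
    rw [this]
    exact (Finset.even_sum _ fun i _ => Int.even_mul_pred_self (k i)).add he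
  obtain ⟨i, hi⟩ := Function.ne_iff.mp hk
  have hpos : 0 < ∑ i, k i ^ 2 := (pow_two_pos_of_ne_zero hi).trans_le <|
    Finset.single_le_sum (fun j _ => sq_nonneg (k j)) (Finset.mem_univ i)
  obtain ⟨m, hm⟩ := hsq
  omega

theorem card_div_four_le_sum_sq_half_sub_int {ι : Type*} [Fintype ι] (k : ι → ℤ) :
    (Fintype.card ι : ℝ) / 4 ≤ ∑ i, (1 / 2 - (k i : ℝ)) ^ 2 := by
  have hterm (m : ℤ) : (1 / 4 : ℝ) ≤ (1 / 2 - (m : ℝ)) ^ 2 := by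
    have hm : 0 ≤ m * (m - 1) := by rcases le_or_gt m 0 with h | h <;> nlinarith
    have hm' : (0 : ℝ) ≤ m * (m - 1) := by exact_mod_cast hm
    nlinarith
  calc (Fintype.card ι : ℝ) / 4 = ∑ _i : ι, (1 / 4 : ℝ) := by simp [div_eq_mul_inv]
    _ ≤ _ := Finset.sum_le_sum fun i _ => hterm (k i)

theorem le_dist_of_mem_union_image_add {E : Type*} [SeminormedAddCommGroup E] {L : Set E}
    {r : ℝ} {t : E} (hsub : ∀ x ∈ L, ∀ y ∈ L, x - y ∈ L)
    (hL : ∀ x ∈ L, ∀ y ∈ L, x ≠ y → r ≤ dist x y) (ht : ∀ x ∈ L, r ≤ dist x t) :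
    ∀ x ∈ L ∪ (· + t) '' L, ∀ y ∈ L ∪ (· + t) '' L, x ≠ y → r ≤ dist x y := by
  have hmixed : ∀ x ∈ L, ∀ y ∈ L, r ≤ dist x (y + t) := fun x hx y hy => by
    rw [dist_eq_norm, sub_add_eq_sub_sub, ← dist_eq_norm]
    exact ht _ (hsub x hx y hy)
  rintro x (hx | ⟨a, ha, rfl⟩) y (hy | ⟨b, hb, rfl⟩) hne
  · exact hL x hx y hy hne
  · exact hmixed x hx b hb
  · rw [dist_comm]
    exact hmixed y hy a ha
  · rw [dist_add_right]
    exact hL a ha b hb fun h => hne (h ▸ rfl)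

theorem sub_mem_D9 {x y : EuclideanSpace ℝ (Fin 9)} (hx : x ∈ D9) (hy : y ∈ D9) :
    x - y ∈ D9 := by
  obtain ⟨n, hn, hxn⟩ := hx
  obtain ⟨m, hm, hym⟩ := hy
  refine ⟨n - m, by simpa [Finset.sum_sub_distrib] using hn.sub hm, fun i => ?_⟩
  simp [hxn i, hym i]

theorem EuclideanSpace.dist_eq_sqrt_sum_sq_of_intCast {ι : Type*} [Fintype ι]
    {x y : EuclideanSpace ℝ ι} {n m : ι → ℤ}
    (hx : ∀ i, x i = n i) (hy : ∀ i, y i = m i) :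
    dist x y = √((∑ i, (n i - m i) ^ 2 : ℤ) : ℝ) := by
  simp [EuclideanSpace.dist_eq, Real.dist_eq, sq_abs, hx, hy]

theorem sqrt_two_le_dist_of_mem_D9 {x y : EuclideanSpace ℝ (Fin 9)} (hx : x ∈ D9) (hy : y ∈ D9)
    (hne : x ≠ y) : √2 ≤ dist x y := by
  obtain ⟨n, hn, hxn⟩ := hx
  obtain ⟨m, hm, hym⟩ := hy
  have hnm : n - m ≠ 0 := fun h => hne <| by
    ext i; rw [hxn, hym, sub_eq_zero.mp (congrFun h i)]
  have := Int.two_le_sum_sq_of_even_sum (by simpa [Finset.sum_sub_distrib] using hn.sub hm) hnm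
  rw [EuclideanSpace.dist_eq_sqrt_sum_sq_of_intCast hxn hym]
  gcongr
  exact_mod_cast this

theorem three_halves_le_dist_cHole {x : EuclideanSpace ℝ (Fin 9)} (hx : x ∈ D9) :
    3 / 2 ≤ dist cHole x := by
  obtain ⟨n, -, hxn⟩ := hx
  have := card_div_four_le_sum_sq_half_sub_int n
  rw [EuclideanSpace.dist_eq, Real.le_sqrt' (by norm_num)]
  simpa [Real.dist_eq, sq_abs, hxn, cHole] using this.trans_eq' (by norm_num)

/-- for all `t` in some open neighborhood of `c`, the 2-periodic
set `Ξ(t) = D₉ ∪ (D₉ + t)` has packing radius `1/√2`: distinct points are at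
distance at least `√2`, with equality attained. -/
theorem stmt_10 :
    ∃ ε > (0 : ℝ), ∀ t : EuclideanSpace ℝ (Fin 9), dist t cHole < ε →
      (∀ x ∈ Xi t, ∀ y ∈ Xi t, x ≠ y → Real.sqrt 2 ≤ dist x y) ∧
      (∃ x ∈ Xi t, ∃ y ∈ Xi t, x ≠ y ∧ dist x y = Real.sqrt 2) := by
  have hε : √2 < 3 / 2 := by
    rw [Real.sqrt_lt' (by norm_num)]; norm_num
  refine ⟨3 / 2 - √2, sub_pos.mpr hε, fun t ht => ⟨?_, ?_⟩⟩
  · refine le_dist_of_mem_union_image_add (fun x hx y hy => sub_mem_D9 hx hy)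
      (fun x hx y hy => sqrt_two_le_dist_of_mem_D9 hx hy) fun x hx => ?_
    linarith [three_halves_le_dist_cHole hx, dist_triangle_right cHole x t, dist_comm t cHole]
  · let n : Fin 9 → ℤ := ![1, 1, 0, 0, 0, 0, 0, 0, 0]
    have hn : Even (∑ i, n i) := by decide
    refine ⟨0, Or.inl ⟨0, by simp, fun _ => by simp⟩,
      WithLp.toLp 2 (fun i => (n i : ℝ)), Or.inl ⟨n, hn, fun _ => rfl⟩, fun h => ?_, ?_⟩
    · simpa [n] using congrArg (· 0) h
    · rw [EuclideanSpace.dist_eq_sqrt_sum_sq_of_intCast (n := 0) (m := n)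
        (fun _ => by simp) fun _ => rfl]
      norm_num [n, Fin.sum_univ_succ]
end

section
/- For k = (n, l) ∈ ℤ^d × ℤ and block symmetric matrices J'(t) with Q'(t) = Q constant, R'(t) = R + tR̃, S'(t) = S + tS̃ + t²·R̃Q⁻¹R̃ᵀ (Q positive definite), if the linearization ⟨∇g, J̃⟩ vanishes for the constraint at k, then kᵀJ'(t)k − kᵀJk = t²·l²·R̃Q⁻¹R̃ᵀ ≥ 0, so any constraint active with zero linear variation is preserved (not violated) along the curve. -/
open Matrix

/-- along the fluid curve `J'(t)` with blocks `Q` (constant),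
`R'(t) = R + tR̃`, `S'(t) = S + tS̃ + t²R̃Q⁻¹R̃ᵀ`, and for `k = (n, l)` whose
constraint has vanishing linearization `⟨∇g, J̃⟩ = 0`, the value
`kᵀJ'(t)k − kᵀJk = t²l²·R̃Q⁻¹R̃ᵀ ≥ 0`, so such an active constraint is
preserved along the curve. -/
theorem stmt_14 (d : ℕ) (Q : Matrix (Fin d) (Fin d) ℝ) (hQ : Q.PosDef)
    (R Rt : Fin d → ℝ) (S St : ℝ)
    (n : Fin d → ℤ) (l : ℤ)
    (v : ℝ → ℝ)
    (hv : ∀ t : ℝ, v t =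
      (fun i => (n i : ℝ)) ⬝ᵥ Q.mulVec (fun i => (n i : ℝ))
        + 2 * (l : ℝ) * ((R + t • Rt) ⬝ᵥ (fun i => (n i : ℝ)))
        + (l : ℝ) ^ 2 * (S + t * St + t ^ 2 * (Rt ⬝ᵥ Q⁻¹.mulVec Rt)))
    (hlin : 2 * (l : ℝ) * (Rt ⬝ᵥ (fun i => (n i : ℝ))) + (l : ℝ) ^ 2 * St = 0) :
    ∀ t : ℝ, v t - v 0 = t ^ 2 * (l : ℝ) ^ 2 * (Rt ⬝ᵥ Q⁻¹.mulVec Rt) ∧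
      0 ≤ v t - v 0 := by
  intro t
  have hq : 0 ≤ Rt ⬝ᵥ Q⁻¹.mulVec Rt := by
    have := hQ.inv.posSemidef.dotProduct_mulVec_nonneg Rt
    simpa using this
  have heq : v t - v 0 = t ^ 2 * (l : ℝ) ^ 2 * (Rt ⬝ᵥ Q⁻¹.mulVec Rt) := by
    rw [hv t, hv 0]
    simp only [add_dotProduct, smul_dotProduct, smul_eq_mul]
    linear_combination t * hlin
  exact ⟨heq, heq ▸ by positivity⟩
end

section
/- Let Q' be a positive semidefinite rational symmetric d×d matrix with nontrivial null space N(Q'), R' a (m−1)×d matrix, and suppose there exist u ∈ N(Q') and l ∈ E−E with c := uᵀ(R')ᵀl > 0. Then inf over k ∈ M of kᵀJ'k = −∞, where J' has blocks Q', R', S'. Specifically, taking integer vectors [v](t) closest to (−tcu, l), the value J'([v](t)) → −∞ as t → ∞. -/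
/-!
The lattice points `k(t) = ([-t u], l)` differ from `(-t u, l)` by a vector `e(t)` in the
cube `[-1/2, 1/2]^d`, on which the form is bounded by compactness. Since `Q' u = 0`, the shift
along `u` changes the form only by `-2tc`, which tends to `-∞`.
-/

open Matrix

/-- `E − E`, the set of differences of elements of `E`. -/
def EmE (m : ℕ) : Set (Fin (m - 1) → ℤ) :=
  {x | ∃ a ∈ Eset m, ∃ b ∈ Eset m, x = a - b}

/-- The integer vectors `M = ℤ^d × (E−E)`. -/
def Mset (d m : ℕ) : Set ((Fin d → ℤ) × (Fin (m - 1) → ℤ)) :=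
  {k | k.2 ∈ EmE m}

/-- The real vector in `ℝ^{d+m-1}` corresponding to `k ∈ M`. -/
def toR (d m : ℕ) (k : (Fin d → ℤ) × (Fin (m - 1) → ℤ)) :
    Fin d ⊕ Fin (m - 1) → ℝ :=
  Sum.elim (fun i => (k.1 i : ℝ)) (fun j => (k.2 j : ℝ))

theorem dotProduct_fromBlocks_mulVec_sub_smul {α n o : Type*} [CommRing α] [Fintype n]
    [Fintype o] {Q : Matrix n n α} (hQ : Q.IsSymm) (R : Matrix o n α) (S : Matrix o o α)
    {u : n → α} (hu : Q *ᵥ u = 0) (e : n → α) (L : o → α) (t : α) :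
    Sum.elim (e - t • u) L ⬝ᵥ fromBlocks Q Rᵀ R S *ᵥ Sum.elim (e - t • u) L =
      Sum.elim e L ⬝ᵥ fromBlocks Q Rᵀ R S *ᵥ Sum.elim e L - 2 * t * (L ⬝ᵥ R *ᵥ u) := by
  have huQ : u ᵥ* Q = 0 := by rw [← mulVec_transpose, hQ.eq, hu]
  have hRT : ∀ x : n → α, x ⬝ᵥ Rᵀ *ᵥ L = L ⬝ᵥ R *ᵥ x := fun x => by
    rw [dotProduct_mulVec, vecMul_transpose, dotProduct_comm]
  simp only [fromBlocks_mulVec, sumElim_dotProduct_sumElim, Sum.elim_comp_inl,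
    Sum.elim_comp_inr, dotProduct_add, hRT, mulVec_sub, mulVec_smul, hu, sub_dotProduct,
    dotProduct_sub, smul_dotProduct, dotProduct_smul, smul_eq_mul]
  rw [dotProduct_mulVec u, huQ]
  simp only [zero_dotProduct, dotProduct_zero, sub_zero, mul_zero]
  ring

theorem abs_round_neg_add_le (y : ℝ) : |(round (-y) : ℝ) + y| ≤ 1 / 2 := by
  rw [← abs_neg, neg_add, ← sub_eq_neg_add]
  exact abs_sub_round (-y)

theorem stmt_17_general (d m : ℕ) (Q' : Matrix (Fin d) (Fin d) ℝ)
    (R' : Matrix (Fin (m - 1)) (Fin d) ℝ)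
    (S' : Matrix (Fin (m - 1)) (Fin (m - 1)) ℝ)
    (hQsymm : Q'.IsSymm)
    (u : Fin d → ℝ) (hu : Q'.mulVec u = 0)
    (l : Fin (m - 1) → ℤ) (hl : l ∈ EmE m)
    (hc : 0 < (fun j => (l j : ℝ)) ⬝ᵥ R'.mulVec u) :
    ∀ B : ℝ, ∃ k ∈ Mset d m,
      toR d m k ⬝ᵥ (Matrix.fromBlocks Q' R'ᵀ R' S').mulVec (toR d m k) < B := by
  intro B
  set L : Fin (m - 1) → ℝ := fun j => (l j : ℝ)
  set c := L ⬝ᵥ R' *ᵥ u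
  set J := fromBlocks Q' R'ᵀ R' S'
  set cube : Set (Fin d → ℝ) := Set.univ.pi fun _ => Set.Icc (-(1 / 2)) (1 / 2)
  have hv : Continuous fun e : Fin d → ℝ => Sum.elim e L :=
    continuous_pi fun | .inl i => continuous_apply i | .inr _ => continuous_const
  obtain ⟨C, hC⟩ : BddAbove ((fun e => Sum.elim e L ⬝ᵥ J *ᵥ Sum.elim e L) '' cube) :=
    (isCompact_univ_pi fun _ => isCompact_Icc).bddAbove_image
      (hv.dotProduct (continuous_const.matrix_mulVec hv)).continuousOn
  obtain ⟨t, ht⟩ : ∃ t : ℝ, C - 2 * t * c < B :=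
    ⟨(C - B) / (2 * c) + 1, by field_simp; linarith⟩
  refine ⟨(fun i => round (-(t * u i)), l), hl, ?_⟩
  set e : Fin d → ℝ := fun i => round (-(t * u i)) + t * u i
  have he : e ∈ cube := fun i _ => abs_le.mp (abs_round_neg_add_le _)
  have hk : toR d m (fun i => round (-(t * u i)), l) = Sum.elim (e - t • u) L := by
    ext (i | j) <;> simp [toR, e, L]
  rw [hk, dotProduct_fromBlocks_mulVec_sub_smul hQsymm R' S' hu]
  linarith [hC ⟨e, he, rfl⟩]

/-- if `Q'` is positive semidefinite, rational and singular, and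
some `u ∈ N(Q')` and `l ∈ E−E` satisfy `c = uᵀ(R')ᵀl > 0`, then the quadratic
form `J' = [[Q', R'ᵀ],[R', S']]` is unbounded below on `M`:
`inf_{k ∈ M} kᵀJ'k = −∞`. -/
theorem stmt_17 (d m : ℕ) (Q' : Matrix (Fin d) (Fin d) ℝ)
    (R' : Matrix (Fin (m - 1)) (Fin d) ℝ)
    (S' : Matrix (Fin (m - 1)) (Fin (m - 1)) ℝ)
    (hQsymm : Q'.IsSymm) (hQpsd : Q'.PosSemidef)
    (hQrat : ∀ i j, ∃ q : ℚ, Q' i j = (q : ℝ))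
    (u : Fin d → ℝ) (hu : Q'.mulVec u = 0) (hu0 : u ≠ 0)
    (l : Fin (m - 1) → ℤ) (hl : l ∈ EmE m)
    (hc : 0 < (fun j => (l j : ℝ)) ⬝ᵥ R'.mulVec u) :
    ∀ B : ℝ, ∃ k ∈ Mset d m,
      toR d m k ⬝ᵥ (Matrix.fromBlocks Q' R'ᵀ R' S').mulVec (toR d m k) < B :=
  stmt_17_general d m Q' R' S' hQsymm u hu l hl hc
end
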